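/- Let p, q ∈ [1,∞] with 1/p + 1/q = 1, let F ⊆ [0,1]ⁿ be a nonempty convex compact set, α > 1, and let R : ℝⁿ → ℝ be β-strongly convex with respect to the ℓ_p norm on F for some β > 0, with R(f) ≥ 0 for all f ∈ F. Let x₀ = 0 and x₁,…,x_T ∈ [0,1]ⁿ, fix f' ∈ F with R(f') > 0, set S := Σ_{t=1}^T ‖x_t − x_{t-1}‖_q² and assume S > 0, and let the learning rate η > 0 satisfy ηα = √(β R(f') / S). For t = 1,…,T let f_t ∈ F minimize f ↦ ⟨f, Σ_{s=1}^{t-1} x_s + α x_{t-1}⟩ + R(f)/η over F and let g_t ∈ F minimize f ↦ ⟨f, Σ_{s=1}^{t} x_s⟩ + R(f)/η over F. If Σ_{t=1}^T ⟨f_t, x_t⟩ ≥ ⟨f', Σ_{t=1}^T x_t⟩, then the forward regret satisfies Σ_{t=1}^T ⟨f_t, x_t⟩ − Σ_{t=1}^T ⟨g_t, x_t⟩ ≤ (2α/(α−1)) √(R(f') · S / β). -/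

import Mathlib

/-!
The forward regret is a sum of one-step stability terms. The leaders `f t` and `g t` minimise
`(β / η)`-strongly convex objectives whose cost vectors differ by
`α (x t - x (t-1)) - (α - 1) x t`, so strong convexity at both minimisers gives
`β ‖f t - g t‖_p² ≤ η ⟨f t - g t, α (x t - x (t-1)) - (α - 1) x t⟩`. Hölder's inequality and
completing the square turn this into `(α - 1) ⟨f t - g t, x t⟩ ≤ η α² ‖x t - x (t-1)‖_q² / (4 β)`;
summing over `t` and inserting the tuned `η` gives `α / (4 (α - 1)) √(R f' S / β)`.
-/

open scoped BigOperators ENNReal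

noncomputable section

/-- The bilinear pairing `⟨a, b⟩ = ∑ i, a i * b i` on `ℝⁿ`. -/
def ip {n : ℕ} (a b : Fin n → ℝ) : ℝ := ∑ i, a i * b i

/-- The `ℓ_p` norm on `ℝⁿ`, for `p ∈ [1, ∞]` (`‖a‖_∞ = max_i |a i|`). -/
def lpNorm {n : ℕ} (p : ℝ≥0∞) (a : Fin n → ℝ) : ℝ :=
  if p = ⊤ then ⨆ i, |a i| else (∑ i, |a i| ^ p.toReal) ^ (1 / p.toReal)

/-- `R` is `β`-strongly convex with respect to the `ℓ_p` norm on the convex set `F`. -/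
def StronglyConvexOnWrt {n : ℕ} (F : Set (Fin n → ℝ)) (β : ℝ) (p : ℝ≥0∞)
    (R : (Fin n → ℝ) → ℝ) : Prop :=
  ∀ a ∈ F, ∀ b ∈ F, ∀ l : ℝ, 0 ≤ l → l ≤ 1 →
    R (l • a + (1 - l) • b) ≤
      l * R a + (1 - l) * R b - β / 2 * l * (1 - l) * (lpNorm p (a - b)) ^ 2

lemma ip_eq_dotProduct {n : ℕ} (a b : Fin n → ℝ) : ip a b = a ⬝ᵥ b := rfl

lemma lpNorm_sub_comm {n : ℕ} (p : ℝ≥0∞) (a b : Fin n → ℝ) :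
    lpNorm p (a - b) = lpNorm p (b - a) := by
  simp only [lpNorm, Pi.sub_apply, abs_sub_comm]

lemma lpNorm_eq_norm_lp {n : ℕ} {p : ℝ≥0∞} (hp : p ≠ 0) (a : Fin n → ℝ) :
    lpNorm p a = ‖(⟨a, Memℓp.all a⟩ : lp (fun _ : Fin n => ℝ) p)‖ := by
  rcases eq_or_ne p ⊤ with rfl | hpt
  · simp [lpNorm, lp.norm_eq_ciSup]
  · rw [lpNorm, if_neg hpt, lp.norm_eq_tsum_rpow (ENNReal.toReal_pos hp hpt), tsum_fintype]
    simp

lemma ip_le_lpNorm_mul_lpNorm {n : ℕ} {p q : ℝ≥0∞} (hpq : p.HolderConjugate q)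
    (a b : Fin n → ℝ) : ip a b ≤ lpNorm p a * lpNorm q b := by
  have : Fact (1 ≤ p) := ⟨hpq.one_le⟩
  have : Fact (1 ≤ q) := ⟨hpq.symm.one_le⟩
  have hmul : ∀ _ : Fin n, ‖ContinuousLinearMap.mul ℝ ℝ‖ ≤ (1 : NNReal) := fun _ => by simp
  set pairing := lp.dualPairing p q (fun _ => ContinuousLinearMap.mul ℝ ℝ) hmul
  rw [lpNorm_eq_norm_lp (hpq.ne_zero p q), lpNorm_eq_norm_lp (hpq.symm.ne_zero q p)]
  calc ip a b ≤ ‖pairing ⟨a, Memℓp.all a⟩ ⟨b, Memℓp.all b⟩‖ := by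
        rw [lp.dualPairing_apply, tsum_fintype]
        exact le_abs_self _
  _ ≤ ‖pairing‖ * _ * _ := pairing.le_opNorm₂ _ _
  _ ≤ 1 * _ * _ := by gcongr; exact lp.norm_dualPairing _ hmul
  _ = _ := by rw [one_mul]

lemma le_of_forall_one_sub_mul_le {A B : ℝ} (h : ∀ l : ℝ, 0 < l → l ≤ 1 → (1 - l) * B ≤ A) :
    B ≤ A := by
  have hlim : Filter.Tendsto (fun l : ℝ => (1 - l) * B) (nhdsWithin 0 (Set.Ioi 0))
      (nhds ((1 - 0) * B)) :=
    (Continuous.tendsto (by fun_prop) 0).mono_left nhdsWithin_le_nhds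
  refine le_of_tendsto (by simpa using hlim) ?_
  filter_upwards [Ioc_mem_nhdsGT one_pos] with l hl using h l hl.1 hl.2

namespace StronglyConvexOnWrt

variable {n : ℕ} {F : Set (Fin n → ℝ)} {β : ℝ} {p : ℝ≥0∞} {R : (Fin n → ℝ) → ℝ}

lemma div_const (hR : StronglyConvexOnWrt F β p R) {η : ℝ} (hη : 0 ≤ η) :
    StronglyConvexOnWrt F (β / η) p (fun w => R w / η) := by
  intro a ha b hb l hl0 hl1
  refine (div_le_div_of_nonneg_right (hR a ha b hb l hl0 hl1) hη).trans_eq ?_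
  ring

lemma ip_add (hR : StronglyConvexOnWrt F β p R) (c : Fin n → ℝ) :
    StronglyConvexOnWrt F β p (fun w => ip w c + R w) := by
  intro a ha b hb l hl0 hl1
  have hlin : ip (l • a + (1 - l) • b) c = l * ip a c + (1 - l) * ip b c := by
    simp only [ip_eq_dotProduct, add_dotProduct, smul_dotProduct, smul_eq_mul]
  have := hR a ha b hb l hl0 hl1
  simp only [hlin]
  linarith

lemma half_mul_sq_lpNorm_le_of_isMinOn (hF : Convex ℝ F) (hR : StronglyConvexOnWrt F β p R)
    {u v : Fin n → ℝ} (hu : u ∈ F) (hv : v ∈ F) (hmin : IsMinOn R F u) :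
    β / 2 * lpNorm p (v - u) ^ 2 ≤ R v - R u := by
  refine le_of_forall_one_sub_mul_le fun l hl0 hl1 => le_of_mul_le_mul_left ?_ hl0
  have hconv := hR v hv u hu l hl0.le hl1
  have hmin_l := isMinOn_iff.mp hmin _ (hF hv hu hl0.le (sub_nonneg.mpr hl1) (add_sub_cancel l 1))
  linarith

end StronglyConvexOnWrt

section FTRL

variable {n : ℕ} {F : Set (Fin n → ℝ)} {β η : ℝ} {p : ℝ≥0∞} {R : (Fin n → ℝ) → ℝ}

lemma sq_lpNorm_sub_le_ip_of_isMinOn (hF : Convex ℝ F) (hR : StronglyConvexOnWrt F β p R)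
    (hη : 0 < η) {u v : Fin n → ℝ} (hu : u ∈ F) (hv : v ∈ F) (c₁ c₂ : Fin n → ℝ)
    (hu_min : IsMinOn (fun w => ip w c₁ + R w / η) F u)
    (hv_min : IsMinOn (fun w => ip w c₂ + R w / η) F v) :
    β * lpNorm p (u - v) ^ 2 ≤ η * ip (u - v) (c₂ - c₁) := by
  have h₁ := ((hR.div_const hη.le).ip_add c₁).half_mul_sq_lpNorm_le_of_isMinOn hF hu hv hu_min
  have h₂ := ((hR.div_const hη.le).ip_add c₂).half_mul_sq_lpNorm_le_of_isMinOn hF hv hu hv_min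
  rw [lpNorm_sub_comm] at h₁
  have key : β / η * lpNorm p (u - v) ^ 2 ≤ ip (u - v) (c₂ - c₁) := by
    simp only [ip_eq_dotProduct, sub_dotProduct, dotProduct_sub] at h₁ h₂ ⊢
    linarith
  rwa [div_mul_eq_mul_div, div_le_iff₀' hη] at key

lemma ip_sub_le_sq_lpNorm_of_isMinOn {q : ℝ≥0∞} (hpq : p.HolderConjugate q) (hF : Convex ℝ F)
    {α : ℝ} (hα : 1 < α) (hβ : 0 < β) (hR : StronglyConvexOnWrt F β p R) (hη : 0 < η)
    {u v : Fin n → ℝ} (hu : u ∈ F) (hv : v ∈ F) (a y y' : Fin n → ℝ)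
    (hu_min : IsMinOn (fun w => ip w (a + α • y') + R w / η) F u)
    (hv_min : IsMinOn (fun w => ip w (a + y) + R w / η) F v) :
    ip u y - ip v y ≤ η * α ^ 2 / (4 * β * (α - 1)) * lpNorm q (y - y') ^ 2 := by
  set N := lpNorm p (u - v)
  set M := lpNorm q (y - y')
  have hstab := sq_lpNorm_sub_le_ip_of_isMinOn hF hR hη hu hv _ _ hu_min hv_min
  have hsplit : ip (u - v) (a + y - (a + α • y')) =
      α * ip (u - v) (y - y') - (α - 1) * ip (u - v) y := by
    simp only [ip_eq_dotProduct, dotProduct_sub, dotProduct_add, dotProduct_smul, smul_eq_mul]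
    ring
  have hholder : ip (u - v) (y - y') ≤ N * M := ip_le_lpNorm_mul_lpNorm hpq _ _
  rw [hsplit] at hstab
  rw [show ip u y - ip v y = ip (u - v) y by simp only [ip_eq_dotProduct, sub_dotProduct],
    div_mul_eq_mul_div, le_div_iff₀ (mul_pos (by positivity) (sub_pos.mpr hα))]
  -- completing the square: `4 β η α N M - 4 β² N² ≤ η² α² M²`
  nlinarith [mul_le_mul_of_nonneg_left hholder (by positivity : 0 ≤ 4 * β * η * α),
    sq_nonneg (η * α * M - 2 * β * N)]

end FTRL

lemma sqrt_mul_div_mul_div_eq {β r S : ℝ} (hβ : 0 < β) (hS : 0 ≤ S) :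
    Real.sqrt (β * r / S) * (S / β) = Real.sqrt (r * S / β) := by
  rw [← Real.sqrt_sq (div_nonneg hS hβ.le), ← Real.sqrt_mul' _ (sq_nonneg _)]
  congr 1
  rcases hS.eq_or_lt with rfl | hS
  · simp
  · field_simp

lemma sum_Icc_one_eq_sum_Icc_one_pred_add {M : Type*} [AddCommMonoid M] (x : ℕ → M) {t : ℕ}
    (ht : 1 ≤ t) : ∑ s ∈ Finset.Icc 1 t, x s = ∑ s ∈ Finset.Icc 1 (t - 1), x s + x t := by
  obtain ⟨k, rfl⟩ : ∃ k, t = k + 1 := ⟨t - 1, by omega⟩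
  rw [Finset.sum_Icc_succ_top (by omega), Nat.add_sub_cancel]

theorem aftrl_forward_regret_general {n T : ℕ} (p q : ℝ≥0∞) (hpq : 1 / p + 1 / q = 1)
    (F : Set (Fin n → ℝ)) (hFconv : Convex ℝ F)
    (α : ℝ) (hα : 1 < α) (β : ℝ) (hβ : 0 < β)
    (R : (Fin n → ℝ) → ℝ) (hRsc : StronglyConvexOnWrt F β p R)
    (x : ℕ → (Fin n → ℝ)) (f' : Fin n → ℝ)
    (S : ℝ) (hS : S = ∑ t ∈ Finset.Icc 1 T, (lpNorm q (x t - x (t - 1))) ^ 2)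
    (η : ℝ) (hη : 0 < η) (hηα : η * α = Real.sqrt (β * R f' / S))
    (f g : ℕ → (Fin n → ℝ))
    (hf : ∀ t ∈ Finset.Icc 1 T, f t ∈ F ∧
      ∀ u ∈ F,
        ip (f t) ((∑ s ∈ Finset.Icc 1 (t - 1), x s) + α • x (t - 1)) + R (f t) / η ≤
        ip u ((∑ s ∈ Finset.Icc 1 (t - 1), x s) + α • x (t - 1)) + R u / η)
    (hg : ∀ t ∈ Finset.Icc 1 T, g t ∈ F ∧
      ∀ u ∈ F,
        ip (g t) (∑ s ∈ Finset.Icc 1 t, x s) + R (g t) / η ≤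
        ip u (∑ s ∈ Finset.Icc 1 t, x s) + R u / η) :
    (∑ t ∈ Finset.Icc 1 T, ip (f t) (x t)) - (∑ t ∈ Finset.Icc 1 T, ip (g t) (x t)) ≤
      2 * α / (α - 1) * Real.sqrt (R f' * S / β) := by
  have hpq' : p.HolderConjugate q :=
    ENNReal.holderConjugate_iff.mpr (by simpa only [one_div] using hpq)
  have hS₀ : 0 ≤ S := hS ▸ Finset.sum_nonneg fun _ _ => sq_nonneg _
  have hstep : ∀ t ∈ Finset.Icc 1 T, ip (f t) (x t) - ip (g t) (x t) ≤
      η * α ^ 2 / (4 * β * (α - 1)) * lpNorm q (x t - x (t - 1)) ^ 2 := by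
    intro t ht
    obtain ⟨hft, hf_min⟩ := hf t ht
    obtain ⟨hgt, hg_min⟩ := hg t ht
    rw [sum_Icc_one_eq_sum_Icc_one_pred_add x (Finset.mem_Icc.mp ht).1] at hg_min
    exact ip_sub_le_sq_lpNorm_of_isMinOn hpq' hFconv hα hβ hRsc hη hft hgt _ _ _
      (isMinOn_iff.mpr hf_min) (isMinOn_iff.mpr hg_min)
  calc _ = ∑ t ∈ Finset.Icc 1 T, (ip (f t) (x t) - ip (g t) (x t)) :=
        (Finset.sum_sub_distrib _ _).symm
    _ ≤ η * α ^ 2 / (4 * β * (α - 1)) * S := by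
        rw [hS, Finset.mul_sum]
        exact Finset.sum_le_sum hstep
    _ = α / (4 * (α - 1)) * (η * α * (S / β)) := by field_simp
    _ = α / (4 * (α - 1)) * Real.sqrt (R f' * S / β) := by
        rw [hηα, sqrt_mul_div_mul_div_eq hβ hS₀]
    _ ≤ 2 * α / (α - 1) * Real.sqrt (R f' * S / β) := by
        gcongr <;> linarith

/-- **Forward regret bound of AFTRL with tuned learning rate.**
With `S = ∑_{t=1}^T ‖x t - x (t-1)‖_q² > 0` and `η α = √(β R f' / S)`, if
`∑_{t=1}^T ⟨f t, x t⟩ ≥ ⟨f', ∑_{t=1}^T x t⟩` then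
`∑_{t=1}^T ⟨f t, x t⟩ - ∑_{t=1}^T ⟨g t, x t⟩ ≤ (2α/(α-1)) √(R f' · S / β)`. -/
theorem aftrl_forward_regret {n T : ℕ} (p q : ℝ≥0∞)
    (hp : 1 ≤ p) (hq : 1 ≤ q) (hpq : 1 / p + 1 / q = 1)
    (F : Set (Fin n → ℝ)) (hF : F.Nonempty) (hFsub : F ⊆ Set.Icc 0 1)
    (hFconv : Convex ℝ F) (hFcomp : IsCompact F)
    (α : ℝ) (hα : 1 < α) (β : ℝ) (hβ : 0 < β)
    (R : (Fin n → ℝ) → ℝ) (hRsc : StronglyConvexOnWrt F β p R)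
    (hRnonneg : ∀ f ∈ F, 0 ≤ R f)
    (x : ℕ → (Fin n → ℝ)) (hx0 : x 0 = 0)
    (hx : ∀ t ∈ Finset.Icc 1 T, x t ∈ Set.Icc (0 : Fin n → ℝ) 1)
    (f' : Fin n → ℝ) (hf' : f' ∈ F) (hRf' : 0 < R f')
    (S : ℝ) (hS : S = ∑ t ∈ Finset.Icc 1 T, (lpNorm q (x t - x (t - 1))) ^ 2)
    (hSpos : 0 < S)
    (η : ℝ) (hη : 0 < η) (hηα : η * α = Real.sqrt (β * R f' / S))
    (f g : ℕ → (Fin n → ℝ))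
    (hf : ∀ t ∈ Finset.Icc 1 T, f t ∈ F ∧
      ∀ u ∈ F,
        ip (f t) ((∑ s ∈ Finset.Icc 1 (t - 1), x s) + α • x (t - 1)) + R (f t) / η ≤
        ip u ((∑ s ∈ Finset.Icc 1 (t - 1), x s) + α • x (t - 1)) + R u / η)
    (hg : ∀ t ∈ Finset.Icc 1 T, g t ∈ F ∧
      ∀ u ∈ F,
        ip (g t) (∑ s ∈ Finset.Icc 1 t, x s) + R (g t) / η ≤
        ip u (∑ s ∈ Finset.Icc 1 t, x s) + R u / η)
    (hlarge : ip f' (∑ t ∈ Finset.Icc 1 T, x t) ≤ ∑ t ∈ Finset.Icc 1 T, ip (f t) (x t)) :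
    (∑ t ∈ Finset.Icc 1 T, ip (f t) (x t)) - (∑ t ∈ Finset.Icc 1 T, ip (g t) (x t)) ≤
      2 * α / (α - 1) * Real.sqrt (R f' * S / β) :=
  aftrl_forward_regret_general p q hpq F hFconv α hα β hβ R hRsc x f' S hS η hη hηα f g hf hg
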